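/- arXiv:1503.01447 — 3 statements merged into one kernel-verified Lean document; each statement's English description precedes it below -/
import Mathlib

section
/- Let s and r be coprime positive integers and let p ∈ ℂ[x,y] be weighted-homogeneous of degree d ≥ 1 with respect to the weights deg x = s, deg y = r, and suppose p is square-free. Then there is no prime element q of ℂ[x,y] dividing both partial derivatives ∂p/∂x and ∂p/∂y. -/
/-!
Euler's identity `∑ wᵢ • (Xᵢ * ∂ᵢp) = d • p` shows that a prime `q` dividing every `∂ᵢp` divides
`p` itself, say `p = q * u`, and `q ∤ u` because `p` is square-free. Then `q` divides
`∂ᵢp = u * ∂ᵢq + q * ∂ᵢu`, hence `∂ᵢq`, which has smaller total degree than `q`. So every `∂ᵢq`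
vanishes, `q` is a nonzero constant, and a unit cannot be prime.
-/

noncomputable section

/-- The weights: deg x = s, deg y = r (x = X 0, y = X 1). -/
def wt (s r : ℕ) : Fin 2 → ℕ := fun i => if i = 0 then s else r

theorem Prime.dvd_derivation_of_dvd_derivation_mul {R A : Type*} [CommSemiring R] [CommRing A]
    [Algebra R A] (D : Derivation R A A) {q u : A} (hq : Prime q) (hu : ¬ q ∣ u)
    (h : q ∣ D (q * u)) : q ∣ D q := by
  rw [D.leibniz, smul_eq_mul, smul_eq_mul] at h
  exact (hq.dvd_or_dvd ((dvd_add_right (dvd_mul_right q _)).mp h)).resolve_left hu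

namespace MvPolynomial

variable {σ R : Type*}

section CommSemiring

variable [CommSemiring R]

theorem IsWeightedHomogeneous.sum_weight_smul_X_mul_pderiv [Fintype σ] {w : σ → ℕ} {d : ℕ}
    {p : MvPolynomial σ R} (hp : p.IsWeightedHomogeneous w d) :
    ∑ i, w i • (X i * pderiv i p) = d • p := by
  conv_lhs => rw [p.as_sum]
  conv_rhs => rw [p.as_sum]
  simp only [map_sum, Finset.mul_sum, Finset.smul_sum, X_mul_pderiv_monomial]
  rw [Finset.sum_comm]
  refine Finset.sum_congr rfl fun m hm => ?_
  rw [← hp (mem_support_iff.mp hm), Finsupp.weight_apply, Finsupp.sum_fintype _ _ (by simp),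
    Finset.sum_smul]
  simp only [smul_smul, smul_eq_mul, mul_comm]

theorem totalDegree_pderiv_lt {i : σ} {p : MvPolynomial σ R} (h : pderiv i p ≠ 0) :
    (pderiv i p).totalDegree < p.totalDegree := by
  have hlt : ∀ m ∈ (pderiv i p).support, (m.sum fun _ e => e) < p.totalDegree := by
    intro m hm
    have hcoeff : coeff (m + Finsupp.single i 1) p ≠ 0 := by
      intro h0
      apply mem_support_iff.mp hm
      rw [coeff_pderiv, h0, zero_mul]
    have := le_totalDegree (mem_support_iff.mpr hcoeff)
    rw [Finsupp.sum_add_index' (by simp) (by simp), Finsupp.sum_single_index rfl] at this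
    omega
  obtain ⟨m, hm⟩ := support_nonempty.mpr h
  rw [totalDegree, Finset.sup_lt_iff ((Nat.zero_le _).trans_lt (hlt m hm))]
  exact hlt

theorem eq_C_of_forall_pderiv_eq_zero [NoZeroDivisors R] [CharZero R] {p : MvPolynomial σ R}
    (h : ∀ i, pderiv i p = 0) : p = C (coeff 0 p) := by
  classical
  ext m
  rw [coeff_C]
  split_ifs with hm
  · rw [hm]
  obtain ⟨i, hi⟩ : ∃ i, m i ≠ 0 := by
    by_contra! h0
    exact hm (Finsupp.ext fun i => (h0 i).symm)
  have := coeff_pderiv (i := i) p (m - Finsupp.single i 1)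
  rw [h i, coeff_zero, Finsupp.sub_add_single_one_cancel hi] at this
  exact (mul_eq_zero.mp this.symm).resolve_right (Nat.cast_add_one_ne_zero _)

end CommSemiring

theorem pderiv_eq_zero_of_dvd [CommRing R] [IsDomain R] {i : σ} {p : MvPolynomial σ R}
    (h : p ∣ pderiv i p) : pderiv i p = 0 := by
  by_contra hne
  exact (totalDegree_le_of_dvd_of_isDomain h hne).not_gt (totalDegree_pderiv_lt hne)

theorem IsWeightedHomogeneous.not_exists_prime_dvd_pderiv {K : Type*} [Field K] [CharZero K]
    [Fintype σ] {w : σ → ℕ} {d : ℕ} {p : MvPolynomial σ K} (hd : d ≠ 0)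
    (hp : p.IsWeightedHomogeneous w d) (hsf : Squarefree p) :
    ¬ ∃ q : MvPolynomial σ K, Prime q ∧ ∀ i, q ∣ pderiv i p := by
  rintro ⟨q, hq, hdvd⟩
  have hqp : q ∣ p := by
    have : q ∣ C (d : K) * p := by
      rw [← smul_eq_C_mul, Nat.cast_smul_eq_nsmul, ← hp.sum_weight_smul_X_mul_pderiv]
      exact Finset.dvd_sum fun i _ => by rw [nsmul_eq_mul]; exact ((hdvd i).mul_left _).mul_left _
    exact ((isUnit_iff_ne_zero.mpr (Nat.cast_ne_zero.mpr hd)).map C).dvd_mul_left.mp this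
  obtain ⟨u, rfl⟩ := hqp
  have hu : ¬ q ∣ u := fun ⟨v, hv⟩ => hq.not_isUnit (hsf q ⟨v, by rw [hv, mul_assoc]⟩)
  have hq_const := eq_C_of_forall_pderiv_eq_zero fun i =>
    pderiv_eq_zero_of_dvd (hq.dvd_derivation_of_dvd_derivation_mul _ hu (hdvd i))
  have hc : coeff 0 q ≠ 0 := fun h0 => hq.ne_zero (by rw [hq_const, h0, map_zero])
  exact hq.not_isUnit (hq_const ▸ (isUnit_iff_ne_zero.mpr hc).map C)

end MvPolynomial

theorem stmt2_general (s r : ℕ)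
    (d : ℕ) (hd : 1 ≤ d) (p : MvPolynomial (Fin 2) ℂ)
    (hhom : p.IsWeightedHomogeneous (wt s r) d) (hsf : Squarefree p) :
    ¬ ∃ q : MvPolynomial (Fin 2) ℂ, Prime q ∧
        q ∣ MvPolynomial.pderiv (0 : Fin 2) p ∧ q ∣ MvPolynomial.pderiv (1 : Fin 2) p := by
  rintro ⟨q, hq, h0, h1⟩
  exact hhom.not_exists_prime_dvd_pderiv (by omega) hsf ⟨q, hq, Fin.forall_fin_two.mpr ⟨h0, h1⟩⟩

/-- if s, r are coprime positive integers and p ∈ ℂ[x,y] is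
weighted-homogeneous of degree d ≥ 1 (deg x = s, deg y = r) and square-free, then no
prime element of ℂ[x,y] divides both ∂p/∂x and ∂p/∂y. -/
theorem stmt2 (s r : ℕ) (hs : 0 < s) (hr : 0 < r) (hco : Nat.Coprime s r)
    (d : ℕ) (hd : 1 ≤ d) (p : MvPolynomial (Fin 2) ℂ)
    (hhom : p.IsWeightedHomogeneous (wt s r) d) (hsf : Squarefree p) :
    ¬ ∃ q : MvPolynomial (Fin 2) ℂ, Prime q ∧
        q ∣ MvPolynomial.pderiv (0 : Fin 2) p ∧ q ∣ MvPolynomial.pderiv (1 : Fin 2) p :=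
  stmt2_general s r d hd p hhom hsf
end
end

section
/- Let R be an associative unital ring, let a, b ∈ R, and let l ≥ 0 and k ≥ 1 be integers. Then (l+k)·[a^l b, a^k] − k·[b, a^{l+k}] lies in L_3(R), the third term of the lower central series of R; that is, (l+k)[a^l b, a^k] = k[b, a^{l+k}] holds in B_2(R) = L_2(R)/L_3(R). -/
/-! Modulo `L₃`, the bracket `[a, -]` is insensitive to cyclic rotation of its argument, since
`[a, uv] - [a, vu] = [a, [u, v]]`. Expanding `[a^(m+1), c]` by the Leibniz rule and rotating
every term gives `[a^(m+1), c] ≡ (m+1)[a, c aᵐ]`. Both brackets of the theorem reduce this way to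
multiples of the single element `[a, b a^(l+k-1)]`, and the multiples cancel. -/

noncomputable section

/-- Lower central series of an associative ring as additive subgroups:
`lcsAdd R i` is `L_{i+1}(R)`, so `lcsAdd R 0 = L₁(R) = R` and `L_{i+2}(R)` is the
additive subgroup generated by all `[a,u] = a*u - u*a` with `u ∈ L_{i+1}(R)`. -/
def lcsAdd (R : Type*) [Ring R] : ℕ → AddSubgroup R
  | 0 => ⊤
  | n + 1 => AddSubgroup.closure {x | ∃ a u, u ∈ lcsAdd R n ∧ x = a * u - u * a}

open QuotientAddGroup

section LowerCentralSeries

variable {R : Type*} [Ring R]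

theorem lie_mem_lcsAdd_succ {n : ℕ} (x : R) {v : R} (hv : v ∈ lcsAdd R n) :
    ⁅x, v⁆ ∈ lcsAdd R (n + 1) := by
  rw [lcsAdd]
  exact AddSubgroup.subset_closure ⟨x, v, hv, Ring.lie_def x v⟩

theorem lie_lie_mem_lcsAdd_two (x u v : R) : ⁅x, ⁅u, v⁆⁆ ∈ lcsAdd R 2 :=
  lie_mem_lcsAdd_succ x (lie_mem_lcsAdd_succ u (by rw [lcsAdd]; trivial))

theorem mk_lie_mul_comm (x u v : R) :
    ((⁅x, u * v⁆ : R) : R ⧸ lcsAdd R 2) = ((⁅x, v * u⁆ : R) : R ⧸ lcsAdd R 2) := by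
  rw [eq_iff_sub_mem]
  convert lie_lie_mem_lcsAdd_two x u v using 1
  simp only [Ring.lie_def]
  noncomm_ring

theorem mul_lie_eq_lie_add_lie (x y c : R) : ⁅x * y, c⁆ = ⁅x, y * c⁆ + ⁅y, c * x⁆ := by
  simp only [Ring.lie_def]
  noncomm_ring

theorem mk_pow_succ_lie (a c : R) (m : ℕ) :
    ((⁅a ^ (m + 1), c⁆ : R) : R ⧸ lcsAdd R 2)
      = (m + 1) • ((⁅a, c * a ^ m⁆ : R) : R ⧸ lcsAdd R 2) := by
  induction m generalizing c with
  | zero => simp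
  | succ m ih =>
    rw [pow_succ' a (m + 1), mul_lie_eq_lie_add_lie, mk_add, ih, mk_lie_mul_comm,
      mul_assoc, ← pow_succ']
    module

end LowerCentralSeries

theorem stmt10_general {R : Type*} [Ring R] (a b : R) (l k : ℕ) :
    (l + k) • ((a ^ l * b) * a ^ k - a ^ k * (a ^ l * b))
      - k • (b * a ^ (l + k) - a ^ (l + k) * b) ∈ lcsAdd R 2 := by
  rcases l with _ | l
  · simp
  have hexpr : (l + 1 + k) • ((a ^ (l + 1) * b) * a ^ k - a ^ k * (a ^ (l + 1) * b))
      - k • (b * a ^ (l + 1 + k) - a ^ (l + 1 + k) * b)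
      = (l + 1 + k) • ⁅a ^ (l + 1), b * a ^ k⁆ - (l + 1) • ⁅a ^ (l + k + 1), b⁆ := by
    rw [← Ring.lie_def, ← Ring.lie_def, mul_lie_eq_lie_add_lie, ← pow_add, Nat.add_comm k (l + 1),
      Nat.add_right_comm l 1 k]
    simp only [Ring.lie_def]
    module
  rw [hexpr, ← eq_zero_iff, mk_sub, mk_nsmul, mk_nsmul, mk_pow_succ_lie, mk_pow_succ_lie, mul_assoc,
    ← pow_add, Nat.add_comm k l]
  module

/-- in any associative unital ring R, for a, b ∈ R and integers l ≥ 0,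
k ≥ 1, the element (l+k)·[aˡb, aᵏ] − k·[b, a^{l+k}] lies in L₃(R); that is,
(l+k)[aˡb, aᵏ] = k[b, a^{l+k}] in B₂(R) = L₂(R)/L₃(R). -/
theorem stmt10 {R : Type*} [Ring R] (a b : R) (l k : ℕ) (hk : 1 ≤ k) :
    (l + k) • ((a ^ l * b) * a ^ k - a ^ k * (a ^ l * b))
      - k • (b * a ^ (l + k) - a ^ (l + k) * b) ∈ lcsAdd R 2 :=
  stmt10_general a b l k
end
end

section
/- Let s and r be coprime positive integers, let n ≥ 1 be an integer, and let a_0, …, a_n ∈ ℂ with a_0 ≠ 0 and a_n ≠ 0. If the polynomial Q = Σ_{k=0}^{n} a_k x^{(n−k)r} y^{ks} is square-free in ℂ[x,y], then the one-variable polynomial Σ_{k=0}^{n} a_k x^{n−k} is square-free in ℂ[x]. -/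
/-!
Write `P = ∑ aₖ xⁿ⁻ᵏ`. The substitution `x ↦ x ^ r, y ↦ y ^ s` applied to the degree-`n`
homogenization of `P` gives `Q`, and both operations are multiplicative once the degrees are
chosen to add up. So `P = c² d` yields `Q = C² D` with `C` the weighted homogenization of `c`;
squarefreeness of `Q` makes `C` a unit, and setting `y = 1` turns `C` into `c(x ^ r)`, which is a
unit only if `c` is one.
-/

open Polynomial

namespace Polynomial

section CommSemiring

variable {R : Type*} [CommSemiring R] (r s : ℕ)

/-- `∑ₖ pₖ x ^ (k r) y ^ ((m - k) s)`, meaningful for `p.natDegree ≤ m`. -/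
noncomputable def weightedHomogenize (p : R[X]) (m : ℕ) : MvPolynomial (Fin 2) R :=
  MvPolynomial.aeval ![.X 0 ^ r, .X 1 ^ s] (p.homogenize m)

lemma weightedHomogenize_finsetSum {ι : Type*} (t : Finset ι) (p : ι → R[X]) (m : ℕ) :
    weightedHomogenize r s (∑ i ∈ t, p i) m = ∑ i ∈ t, weightedHomogenize r s (p i) m := by
  simp only [weightedHomogenize, homogenize_finsetSum, map_sum]

lemma weightedHomogenize_C_mul_X_pow {k m : ℕ} (hk : k ≤ m) (a : R) :
    weightedHomogenize r s (C a * X ^ k) m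
      = .C a * .X 0 ^ (k * r) * .X 1 ^ ((m - k) * s) := by
  rw [weightedHomogenize, homogenize_C_mul, homogenize_X_pow hk]
  simp only [map_mul, map_pow, MvPolynomial.aeval_C, MvPolynomial.aeval_X,
    MvPolynomial.algebraMap_eq, Matrix.cons_val_zero, Matrix.cons_val_one]
  ring

lemma weightedHomogenize_mul {p q : R[X]} {m n : ℕ} (hp : p.natDegree ≤ m)
    (hq : q.natDegree ≤ n) :
    weightedHomogenize r s (p * q) (m + n)
      = weightedHomogenize r s p m * weightedHomogenize r s q n := by
  rw [weightedHomogenize, homogenize_mul p q hp hq, map_mul]; rfl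

lemma aeval_weightedHomogenize_X_one {p : R[X]} {m : ℕ} (hp : p.natDegree ≤ m) :
    MvPolynomial.aeval ![X, 1] (weightedHomogenize r s p m) = expand R r p := by
  rw [weightedHomogenize, ← AlgHom.comp_apply, MvPolynomial.comp_aeval,
    aeval_homogenize_of_eq_one hp _ (by simp)]
  simp [expand_eq_comp_X_pow, comp_eq_aeval]

end CommSemiring

section IsDomain

variable {R : Type*} [CommRing R] [IsDomain R] {r : ℕ} (s : ℕ)

lemma isUnit_of_isUnit_weightedHomogenize (hr : 0 < r) {p : R[X]} {m : ℕ}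
    (hp : p.natDegree ≤ m) (h : IsUnit (weightedHomogenize r s p m)) : IsUnit p := by
  have := isLocalHom_expand R hr
  have hexpand : IsUnit (expand R r p) :=
    aeval_weightedHomogenize_X_one r s hp ▸ h.map (MvPolynomial.aeval ![X, 1])
  exact hexpand.of_map

theorem squarefree_of_squarefree_weightedHomogenize (hr : 0 < r) {p : R[X]} {n : ℕ}
    (hp : p.natDegree ≤ n) (h : Squarefree (weightedHomogenize r s p n)) : Squarefree p := by
  rintro c ⟨d, rfl⟩
  have hccd : c * c * d ≠ 0 := by
    rintro hzero
    exact h.ne_zero (by simp [weightedHomogenize, hzero])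
  have hc : c ≠ 0 := left_ne_zero_of_mul (left_ne_zero_of_mul hccd)
  have hd : d ≠ 0 := right_ne_zero_of_mul hccd
  rw [natDegree_mul (mul_ne_zero hc hc) hd, natDegree_mul hc hc] at hp
  obtain ⟨k, rfl⟩ := Nat.exists_eq_add_of_le hp
  rw [add_assoc _ d.natDegree,
    weightedHomogenize_mul r s natDegree_mul_le (Nat.le_add_right d.natDegree k),
    weightedHomogenize_mul r s le_rfl le_rfl] at h
  exact isUnit_of_isUnit_weightedHomogenize s hr le_rfl (h _ (dvd_mul_right _ _))

end IsDomain

end Polynomial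

theorem stmt14_general (s r : ℕ) (hr : 0 < r)
    (n : ℕ) (a : ℕ → ℂ)
    (hQ : Squarefree (∑ k ∈ Finset.range (n + 1),
      MvPolynomial.C (a k) * MvPolynomial.X (0 : Fin 2) ^ ((n - k) * r)
        * MvPolynomial.X (1 : Fin 2) ^ (k * s))) :
    Squarefree (∑ k ∈ Finset.range (n + 1), Polynomial.C (a k) * Polynomial.X ^ (n - k)) := by
  have hdeg : (∑ k ∈ Finset.range (n + 1), C (a k) * X ^ (n - k)).natDegree ≤ n :=
    natDegree_sum_le_of_forall_le _ _ fun k _ =>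
      (natDegree_C_mul_X_pow_le _ _).trans (Nat.sub_le n k)
  refine squarefree_of_squarefree_weightedHomogenize s hr hdeg ?_
  rw [weightedHomogenize_finsetSum]
  convert hQ using 2 with k hk
  rw [weightedHomogenize_C_mul_X_pow r s (Nat.sub_le n k),
    Nat.sub_sub_self (Finset.mem_range_succ_iff.mp hk)]

/-- let s, r be coprime positive integers, n ≥ 1, and a_0, …, a_n ∈ ℂ
with a_0 ≠ 0 and a_n ≠ 0. If Q = Σ_{k=0}^{n} a_k x^{(n−k)r} y^{ks} is square-free in
ℂ[x,y], then Σ_{k=0}^{n} a_k x^{n−k} is square-free in ℂ[x]. -/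
theorem stmt14 (s r : ℕ) (hs : 0 < s) (hr : 0 < r) (hco : Nat.Coprime s r)
    (n : ℕ) (hn : 1 ≤ n) (a : ℕ → ℂ) (ha0 : a 0 ≠ 0) (han : a n ≠ 0)
    (hQ : Squarefree (∑ k ∈ Finset.range (n + 1),
      MvPolynomial.C (a k) * MvPolynomial.X (0 : Fin 2) ^ ((n - k) * r)
        * MvPolynomial.X (1 : Fin 2) ^ (k * s))) :
    Squarefree (∑ k ∈ Finset.range (n + 1), Polynomial.C (a k) * Polynomial.X ^ (n - k)) :=
  stmt14_general s r hr n a hQ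
end
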